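/- arXiv:2109.04068 — 6 statements merged into one kernel-verified Lean document; each statement's English description precedes it below -/
import Mathlib

section
/- For every sufficiently large integer k there exists a prime number p that can be written as the sum of k pairwise different Fibonacci numbers (consecutive Fibonacci numbers allowed). -/
/-!
By Bertrand's postulate there is a prime `p` with `F (2k+1) < p ≤ 2 F (2k+1) < F (2k+3) - 1`.
Every `n < F (2k+3) - 1` is a sum of at most `k` Fibonacci numbers with distinct indices `≥ 2`
(greedy, Zeckendorf-style). As long as such a sum of `t < k` terms is at least `F (2t+3)`, some
summand `F (j+2)` has neither `F j` nor `F (j+1)` beside it (otherwise all indices are at most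
`2t+1`), and replacing it by `F j + F (j+1)` adds one term; so `p ≥ F (2k+1)` can be pushed up
to exactly `k` terms.
-/

open Finset Nat

namespace FibonacciSum

def IsSumOfDistinctFib (k n : ℕ) : Prop :=
  ∃ S : Finset ℕ, #S = k ∧ (∀ i ∈ S, 2 ≤ i) ∧ ∑ i ∈ S, fib i = n

theorem exists_card_le_of_add_one_lt_fib (k : ℕ) {n : ℕ} (hn : n + 1 < fib (2 * k + 3)) :
    ∃ S : Finset ℕ, #S ≤ k ∧ (∀ i ∈ S, 2 ≤ i ∧ fib i ≤ n) ∧ ∑ i ∈ S, fib i = n := by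
  induction k generalizing n with
  | zero =>
    obtain rfl : n = 0 := by simp [fib_add_two] at hn; omega
    exact ⟨∅, by simp⟩
  | succ k ih =>
    by_cases hsmall : n + 1 < fib (2 * k + 3)
    · obtain ⟨S, hcard, hS, hsum⟩ := ih hsmall
      exact ⟨S, by omega, hS, hsum⟩
    -- the top summand `F m` is `F (2k+2)`, `F (2k+3)` or `F (2k+4)`
    obtain ⟨m, hm, hfm, hrest, hrest'⟩ : ∃ m, 2 ≤ m ∧ fib m ≤ n ∧ n - fib m < fib m ∧
        n - fib m + 1 < fib (2 * k + 3) := by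
      have h3 : fib (2 * k + 3) = fib (2 * k + 1) + fib (2 * k + 2) := fib_add_two
      have h4 : fib (2 * k + 4) = fib (2 * k + 2) + fib (2 * k + 3) := fib_add_two
      have h5 : fib (2 * (k + 1) + 3) = fib (2 * k + 3) + fib (2 * k + 4) := fib_add_two
      have h1 : 0 < fib (2 * k + 1) := fib_pos.mpr (by omega)
      have h2 : fib (2 * k + 1) ≤ fib (2 * k + 2) := fib_le_fib_succ
      by_cases hn3 : n < fib (2 * k + 3)
      · exact ⟨2 * k + 2, by omega, by omega, by omega, by omega⟩
      by_cases hn4 : n < fib (2 * k + 4)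
      · exact ⟨2 * k + 3, by omega, by omega, by omega, by omega⟩
      · exact ⟨2 * k + 4, by omega, by omega, by omega, by omega⟩
    obtain ⟨S, hcard, hS, hsum⟩ := ih hrest'
    have hmS : m ∉ S := fun h => by have := (hS m h).2; omega
    refine ⟨insert m S, by rw [card_insert_of_notMem hmS]; omega, ?_, ?_⟩
    · simp only [mem_insert, forall_eq_or_imp]
      exact ⟨⟨hm, hfm⟩, fun i hi => ⟨(hS i hi).1, by have := (hS i hi).2; omega⟩⟩
    · rw [sum_insert hmS, hsum]; omega

theorem subset_range_of_forall_mem_or_mem {S : Finset ℕ}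
    (hS : ∀ m, m + 2 ∈ S → 2 ≤ m → m ∈ S ∨ m + 1 ∈ S) : S ⊆ range (2 * #S + 2) := by
  induction S using Finset.induction_on_max with
  | empty => simp
  | insert a S hlt ih =>
    have mem_of_lt : ∀ x ∈ insert a S, x < a → x ∈ S :=
      fun x hx hxa => (mem_insert.mp hx).resolve_left hxa.ne
    have hsub : S ⊆ range (2 * #S + 2) := ih fun m hm hm2 =>
      have := hlt _ hm
      (hS m (mem_insert_of_mem hm) hm2).imp (mem_of_lt _ · (by omega)) (mem_of_lt _ · (by omega))
    have ha : a < 2 * #S + 4 := by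
      by_contra! ha
      obtain ⟨m, rfl⟩ : ∃ m, a = m + 2 := ⟨a - 2, by omega⟩
      rcases hS m (mem_insert_self _ S) (by omega) with h | h
      · have := mem_range.mp (hsub (mem_of_lt _ h (by omega))); omega
      · have := mem_range.mp (hsub (mem_of_lt _ h (by omega))); omega
    rw [card_insert_of_notMem fun h => (hlt a h).false]
    exact insert_subset (mem_range.mpr (by omega)) (hsub.trans (range_subset_range.mpr (by omega)))

theorem sum_fib_lt_of_forall_mem_or_mem {S : Finset ℕ}
    (hS : ∀ m, m + 2 ∈ S → 2 ≤ m → m ∈ S ∨ m + 1 ∈ S) : ∑ i ∈ S, fib i < fib (2 * #S + 3) := by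
  have hle := sum_le_sum_of_subset (f := fib) (subset_range_of_forall_mem_or_mem hS)
  have hrange : fib (2 * #S + 3) = (∑ i ∈ range (2 * #S + 2), fib i) + 1 :=
    fib_succ_eq_succ_sum _
  omega

theorem sum_fib_split {S : Finset ℕ} {m : ℕ} (hm : m + 2 ∈ S) (h0 : m ∉ S) (h1 : m + 1 ∉ S) :
    #(insert m (insert (m + 1) (S.erase (m + 2)))) = #S + 1 ∧
      ∑ i ∈ insert m (insert (m + 1) (S.erase (m + 2))), fib i = ∑ i ∈ S, fib i := by
  have h1' : m + 1 ∉ S.erase (m + 2) := fun h => h1 (mem_of_mem_erase h)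
  have h0' : m ∉ insert (m + 1) (S.erase (m + 2)) := by
    simp only [mem_insert, mem_erase, not_or]
    exact ⟨by omega, fun h => h0 h.2⟩
  have hcard := card_erase_add_one hm
  have hsum := sum_erase_add S fib hm
  rw [card_insert_of_notMem h0', card_insert_of_notMem h1', sum_insert h0', sum_insert h1']
  rw [fib_add_two] at hsum
  omega

theorem IsSumOfDistinctFib.succ {t n : ℕ} (h : IsSumOfDistinctFib t n)
    (hn : fib (2 * t + 3) ≤ n) : IsSumOfDistinctFib (t + 1) n := by
  obtain ⟨S, rfl, hS, rfl⟩ := h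
  obtain ⟨m, hm, hm2, h0, h1⟩ : ∃ m, m + 2 ∈ S ∧ 2 ≤ m ∧ m ∉ S ∧ m + 1 ∉ S := by
    by_contra! hsplit
    exact (sum_fib_lt_of_forall_mem_or_mem fun m hm hm2 =>
      or_iff_not_imp_left.mpr (hsplit m hm hm2)).not_ge hn
  obtain ⟨hcard, hsum⟩ := sum_fib_split hm h0 h1
  refine ⟨_, hcard, ?_, hsum⟩
  simp only [mem_insert, mem_erase]
  rintro i (rfl | rfl | ⟨-, hi⟩)
  · exact hm2
  · omega
  · exact hS i hi

theorem IsSumOfDistinctFib.of_le {t k n : ℕ} (h : IsSumOfDistinctFib t n) (htk : t ≤ k)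
    (hn : fib (2 * k + 1) ≤ n) : IsSumOfDistinctFib k n := by
  induction k, htk using Nat.le_induction with
  | base => exact h
  | succ k _ ih =>
    exact (ih ((fib_mono (by omega)).trans hn)).succ hn

theorem isSumOfDistinctFib_of_fib_le_of_add_one_lt_fib {k n : ℕ}
    (hlo : fib (2 * k + 1) ≤ n) (hhi : n + 1 < fib (2 * k + 3)) : IsSumOfDistinctFib k n := by
  obtain ⟨S, hcard, hS, hsum⟩ := exists_card_le_of_add_one_lt_fib k hhi
  exact IsSumOfDistinctFib.of_le ⟨S, rfl, fun i hi => (hS i hi).1, hsum⟩ hcard hlo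

end FibonacciSum

/-- For every sufficiently large integer `k` there exists a prime that can be written as a
sum of `k` pairwise different Fibonacci numbers (consecutive Fibonacci indices allowed).
Distinct indices `≥ 2` give pairwise different Fibonacci numbers. -/
theorem prime_sum_of_k_distinct_fibonacci :
    ∃ k₀ : ℕ, ∀ k : ℕ, k₀ ≤ k →
      ∃ p : ℕ, p.Prime ∧
        ∃ S : Finset ℕ, S.card = k ∧ (∀ i ∈ S, 2 ≤ i) ∧ p = ∑ i ∈ S, Nat.fib i := by
  refine ⟨2, fun k hk => ?_⟩
  obtain ⟨p, hp, hlo, hhi⟩ :=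
    exists_prime_lt_and_le_two_mul (fib (2 * k + 1)) (fib_pos.mpr (by omega)).ne'
  have hfib : fib (2 * k + 3) = 2 * fib (2 * k + 1) + fib (2 * k) := by
    rw [fib_add_two, fib_add_two (n := 2 * k)]; ring
  have hfib4 : 3 ≤ fib (2 * k) := fib_mono (show 4 ≤ 2 * k by omega)
  obtain ⟨S, hcard, hS, hsum⟩ :=
    FibonacciSum.isSumOfDistinctFib_of_fib_le_of_add_one_lt_fib hlo.le (by omega)
  exact ⟨p, hp, S, hcard, hS, hsum.symm⟩
end

section
/- For every m < F_{k-3}, the Zeckendorf digits of m·F_k satisfy δ_ℓ(m F_k) = 0 for all ℓ < k − log_φ m − 1 and for all ℓ > k + log_φ m + 2. -/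
/-!
Multiplying a Zeckendorf expansion `n = ∑ δ_j F_j` by `φ` and using `F_{j+1} - φ F_j = ψ^j`
gives `φ n = ∑ δ_j F_{j+1} - ∑ δ_j ψ^j`. Since the digits vanish below index 2, the conjugate sum
`∑ δ_j ψ^j` has absolute value at most `|ψ|`; for `n = m F_k` with `m < F_{k-3}` the number
`m |ψ|^k` is also small, so integrality forces `∑ δ_j ψ^j = m ψ^k`. As no two consecutive digits
are 1, the conjugate sum is at least `|ψ|^{ℓ₀+1}` in absolute value, `ℓ₀` the lowest nonzero
digit; comparing with `m |ψ|^k` bounds the low digits. The high digits are bounded directly by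
`F_ℓ ≤ m F_k` and `F_n ≈ φ^{n-1}`.
-/

/-- A valid Zeckendorf representation of `n`: digits in `{0,1}`, digits below index 2 vanish,
no two consecutive ones, finite support, and the weighted sum equals `n`. -/
def IsZeckRep (n : ℕ) (δ : ℕ → ℕ) : Prop :=
  (∀ k, δ k ≤ 1) ∧ (∀ k < 2, δ k = 0) ∧ (∀ k, δ (k + 1) = 1 → δ k = 0) ∧
    ∃ L, (∀ k, L < k → δ k = 0) ∧ n = ∑ k ∈ Finset.range (L + 1), δ k * Nat.fib k

-- The canonical Zeckendorf digit function.
open Classical in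
noncomputable def zeckDigit (n k : ℕ) : ℕ :=
  if h : ∃ δ : ℕ → ℕ, IsZeckRep n δ then h.choose k else 0

noncomputable def phi : ℝ := (1 + Real.sqrt 5) / 2

open Finset Real goldenRatio

lemma phi_eq_goldenRatio : phi = φ := rfl

lemma abs_goldenConj_mul_goldenRatio : |ψ| * φ = 1 := by
  rw [abs_of_neg goldenConj_neg, neg_mul, goldenConj_mul_goldenRatio, neg_neg]

lemma abs_goldenConj_lt_one : |ψ| < 1 :=
  abs_lt.mpr ⟨neg_one_lt_goldenConj, goldenConj_neg.trans one_pos⟩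

lemma abs_goldenConj_pow_mul_goldenRatio_pow (n : ℕ) : |ψ| ^ n * φ ^ n = 1 := by
  rw [← mul_pow, abs_goldenConj_mul_goldenRatio, one_pow]

lemma goldenRatio_mul_fib_le_pow (n : ℕ) : φ * Nat.fib n ≤ φ ^ n := by
  have hmono : (Nat.fib n : ℝ) ≤ Nat.fib (n + 1) := by exact_mod_cast Nat.fib_le_fib_succ
  rw [← fib_succ_sub_goldenConj_mul_fib, ← one_sub_goldenRatio]
  linarith

lemma pow_le_goldenRatio_mul_fib_succ (n : ℕ) : φ ^ n ≤ φ * Nat.fib (n + 1) := by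
  have hinv : φ * (φ - 1) = 1 := by linear_combination goldenRatio_sq
  have h := mul_le_mul_of_nonneg_right (goldenRatio_mul_fib_le_pow n)
    (sub_nonneg.mpr one_lt_goldenRatio.le)
  have hsucc := goldenRatio_mul_fib_succ_add_fib n
  rw [pow_succ] at hsucc
  nlinarith

section Digits

variable {δ : ℕ → ℕ}

lemma sum_range_add_mul_pow (x : ℝ) (a n : ℕ) :
    ∑ i ∈ range (a + n), (δ i : ℝ) * x ^ i =
      ∑ i ∈ range a, (δ i : ℝ) * x ^ i + x ^ a * ∑ i ∈ range n, (δ (a + i) : ℝ) * x ^ i := by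
  rw [sum_range_add, mul_sum]
  congr 1
  refine sum_congr rfl fun i _ => ?_
  ring

-- The step is `x ↦ δ 0 + ψ x`; as `ψ < 0`, it maps `[-1, φ]` into `[-1, 1 - ψ] = [-1, φ]`.
lemma sum_mul_goldenConj_pow_mem_Icc (hδ : ∀ i, δ i ≤ 1) (n : ℕ) :
    ∑ i ∈ range n, (δ i : ℝ) * ψ ^ i ∈ Set.Icc (-1) φ := by
  induction n generalizing δ with
  | zero => simp [goldenRatio_pos.le]
  | succ n ih =>
    obtain ⟨hlo, hhi⟩ := ih (fun i => hδ (1 + i))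
    rw [add_comm, sum_range_add_mul_pow]
    have hd : (δ 0 : ℝ) ≤ 1 := by exact_mod_cast hδ 0
    simp only [range_one, sum_singleton, pow_zero, mul_one, pow_one]
    constructor <;> nlinarith [goldenConj_neg, goldenConj_mul_goldenRatio,
      goldenRatio_add_goldenConj, (Nat.cast_nonneg (δ 0) : (0 : ℝ) ≤ δ 0)]

lemma neg_goldenConj_le_sum_mul_goldenConj_pow (hδ : ∀ i, δ i ≤ 1) (h0 : δ 0 = 1) (h1 : δ 1 = 0)
    (n : ℕ) : -ψ ≤ ∑ i ∈ range (2 + n), (δ i : ℝ) * ψ ^ i := by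
  obtain ⟨hlo, -⟩ := sum_mul_goldenConj_pow_mem_Icc (fun i => hδ (2 + i)) n
  rw [sum_range_add_mul_pow]
  simp only [sum_range_succ, range_zero, sum_empty, h0, h1, Nat.cast_one, Nat.cast_zero, pow_zero,
    pow_one, one_mul, zero_mul, zero_add, add_zero]
  nlinarith [goldenConj_sq, sq_nonneg ψ]

lemma abs_sum_mul_goldenConj_pow_le (hδ : ∀ i, δ i ≤ 1) {a N : ℕ} (hlow : ∀ i < a, δ i = 0)
    (hN : a ≤ N) : |∑ i ∈ range N, (δ i : ℝ) * ψ ^ i| ≤ |ψ| ^ a * φ := by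
  obtain ⟨n, rfl⟩ := Nat.exists_eq_add_of_le hN
  obtain ⟨hlo, hhi⟩ := sum_mul_goldenConj_pow_mem_Icc (fun i => hδ (a + i)) n
  rw [sum_range_add_mul_pow, sum_eq_zero fun i hi => by simp [hlow i (mem_range.mp hi)], zero_add,
    abs_mul, abs_pow]
  gcongr
  exact abs_le.mpr ⟨by linarith [one_lt_goldenRatio], hhi⟩

lemma pow_abs_goldenConj_le_abs_sum (hδ : ∀ i, δ i ≤ 1) {a N : ℕ} (hlow : ∀ i < a, δ i = 0)
    (ha : δ a = 1) (hnext : δ (a + 1) = 0) (hN : a + 2 ≤ N) :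
    |ψ| ^ (a + 1) ≤ |∑ i ∈ range N, (δ i : ℝ) * ψ ^ i| := by
  obtain ⟨n, rfl⟩ := Nat.exists_eq_add_of_le hN
  have hV := neg_goldenConj_le_sum_mul_goldenConj_pow (δ := fun i => δ (a + i)) (fun i => hδ _)
    ha hnext n
  rw [add_assoc, sum_range_add_mul_pow, sum_eq_zero fun i hi => by simp [hlow i (mem_range.mp hi)],
    zero_add, abs_mul, abs_pow, pow_succ]
  refine mul_le_mul_of_nonneg_left ?_ (by positivity)
  rw [abs_of_neg goldenConj_neg]
  exact hV.trans (le_abs_self _)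

lemma sum_mul_goldenConj_pow_eq {N m k : ℕ}
    (hsum : ∑ i ∈ range N, δ i * Nat.fib i = m * Nat.fib k)
    (hsmall : |∑ i ∈ range N, (δ i : ℝ) * ψ ^ i| + m * |ψ| ^ k < 1) :
    ∑ i ∈ range N, (δ i : ℝ) * ψ ^ i = m * ψ ^ k := by
  set S := ∑ i ∈ range N, (δ i : ℝ) * ψ ^ i
  set A := ∑ i ∈ range N, δ i * Nat.fib (i + 1)
  have hsumR : ∑ i ∈ range N, (δ i : ℝ) * Nat.fib i = m * Nat.fib k := by exact_mod_cast hsum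
  have hconj : (A : ℝ) - (m * Nat.fib (k + 1) : ℕ) = S - m * ψ ^ k := by
    have hφ : (A : ℝ) - S = φ * ∑ i ∈ range N, (δ i : ℝ) * Nat.fib i := by
      simp only [A, S, Nat.cast_sum, Nat.cast_mul, mul_sum, ← sum_sub_distrib]
      refine sum_congr rfl fun i _ => ?_
      rw [← mul_sub, ← fib_succ_sub_goldenRatio_mul_fib]
      ring
    rw [hsumR] at hφ
    push_cast
    linear_combination hφ - (m : ℝ) * fib_succ_sub_goldenRatio_mul_fib k
  have hA : A = m * Nat.fib (k + 1) := by
    have h : |((A : ℤ) - (m * Nat.fib (k + 1) : ℕ) : ℤ)| < 1 := by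
      have : |(A : ℝ) - (m * Nat.fib (k + 1) : ℕ)| < 1 := by
        rw [hconj]
        refine (abs_sub _ _).trans_lt ?_
        rwa [abs_mul, abs_pow, Nat.abs_cast]
      exact_mod_cast this
    have := Int.abs_lt_one_iff.mp h
    omega
  rw [hA, sub_self] at hconj
  linarith

end Digits

namespace IsZeckRep

variable {n m k ℓ : ℕ} {δ : ℕ → ℕ}

lemma exists_sum_range_eq (h : IsZeckRep n δ) :
    ∃ L, ∀ N, L ≤ N → ∑ i ∈ range N, δ i * Nat.fib i = n := by
  obtain ⟨-, -, -, L, hL, hsum⟩ := h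
  refine ⟨L + 1, fun N hN => hsum ▸ (sum_subset (range_subset_range.mpr hN) fun i _ hi => ?_).symm⟩
  simp [hL i (by simpa using hi)]

lemma fib_le (h : IsZeckRep n δ) (hℓ : δ ℓ = 1) : Nat.fib ℓ ≤ n := by
  obtain ⟨L, hL⟩ := h.exists_sum_range_eq
  rw [← hL (max L (ℓ + 1)) (le_max_left _ _)]
  calc Nat.fib ℓ = δ ℓ * Nat.fib ℓ := by rw [hℓ, one_mul]
    _ ≤ _ := single_le_sum (f := fun i => δ i * Nat.fib i) (fun i _ => Nat.zero_le _)
        (mem_range.mpr (by omega))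

lemma pow_le_mul_pow_succ (h : IsZeckRep (m * Nat.fib k) δ) (hℓ : δ ℓ = 1) :
    φ ^ ℓ ≤ m * φ ^ (k + 1) := by
  obtain ⟨a, rfl⟩ : ∃ a, ℓ = a + 1 :=
    Nat.exists_eq_succ_of_ne_zero fun h0 => by simp [h0, h.2.1 0 two_pos] at hℓ
  have hfib : (Nat.fib (a + 1) : ℝ) ≤ m * Nat.fib k := by exact_mod_cast h.fib_le hℓ
  calc φ ^ (a + 1) = φ * φ ^ a := pow_succ' φ a
    _ ≤ φ * (φ * Nat.fib (a + 1)) := by gcongr; exact pow_le_goldenRatio_mul_fib_succ a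
    _ ≤ φ * (φ * (m * Nat.fib k)) := by gcongr
    _ = m * φ * (φ * Nat.fib k) := by ring
    _ ≤ m * φ * φ ^ k := by gcongr; exact goldenRatio_mul_fib_le_pow k
    _ = m * φ ^ (k + 1) := by ring

lemma pow_le_mul_pow_succ_of_small (h : IsZeckRep (m * Nat.fib k) δ)
    (hsmall : m * |ψ| ^ k + |ψ| < 1) (hℓ : δ ℓ = 1) : φ ^ k ≤ m * φ ^ (ℓ + 1) := by
  classical
  have hex : ∃ i, δ i = 1 := ⟨ℓ, hℓ⟩
  set a := Nat.find hex
  have ha : δ a = 1 := Nat.find_spec hex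
  have hlow : ∀ i < a, δ i = 0 := fun i hi => by
    have := Nat.find_min hex hi; have := h.1 i; omega
  have hnext : δ (a + 1) = 0 := by have := h.1 (a + 1); have := h.2.2.1 a; omega
  have hal : a ≤ ℓ := Nat.find_min' hex hℓ
  obtain ⟨L, hL⟩ := h.exists_sum_range_eq
  have hS_le : |∑ i ∈ range (L + a + 2), (δ i : ℝ) * ψ ^ i| ≤ |ψ| := by
    have := abs_sum_mul_goldenConj_pow_le h.1 h.2.1 (show 2 ≤ L + a + 2 by omega)
    rwa [sq, mul_assoc, abs_goldenConj_mul_goldenRatio, mul_one] at this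
  have hS := sum_mul_goldenConj_pow_eq (hL (L + a + 2) (by omega)) (by linarith)
  have hS_ge := pow_abs_goldenConj_le_abs_sum h.1 hlow ha hnext (show a + 2 ≤ L + a + 2 by omega)
  rw [hS, abs_mul, abs_pow, Nat.abs_cast] at hS_ge
  have hψ : |ψ| ^ (ℓ + 1) ≤ m * |ψ| ^ k :=
    (pow_le_pow_of_le_one (abs_nonneg _) abs_goldenConj_lt_one.le (by omega : a + 1 ≤ ℓ + 1)).trans
      hS_ge
  calc φ ^ k = |ψ| ^ (ℓ + 1) * φ ^ (ℓ + 1) * φ ^ k := by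
        rw [abs_goldenConj_pow_mul_goldenRatio_pow, one_mul]
    _ ≤ m * |ψ| ^ k * φ ^ (ℓ + 1) * φ ^ k := by gcongr
    _ = m * φ ^ (ℓ + 1) * (|ψ| ^ k * φ ^ k) := by ring
    _ = m * φ ^ (ℓ + 1) := by rw [abs_goldenConj_pow_mul_goldenRatio_pow, mul_one]

end IsZeckRep

lemma mul_abs_goldenConj_pow_add_lt_one {m k : ℕ} (hmk : m < Nat.fib (k - 3)) :
    m * |ψ| ^ k + |ψ| < 1 := by
  obtain ⟨j, rfl⟩ : ∃ j, k = j + 4 := ⟨k - 4, by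
    have : k - 3 ≠ 0 := by rintro h; simp [h] at hmk
    omega⟩
  have hm : (m : ℝ) < φ ^ j := by
    have h1 : (m : ℝ) < Nat.fib (j + 1) := by exact_mod_cast hmk
    have h2 := goldenRatio_mul_fib_le_pow (j + 1)
    rw [pow_succ'] at h2
    exact h1.trans_le (le_of_mul_le_mul_left h2 goldenRatio_pos)
  have hsq : |ψ| ^ 2 = 1 - |ψ| := by
    rw [sq_abs, goldenConj_sq, abs_of_neg goldenConj_neg]; ring
  have hpos : 0 < |ψ| := abs_pos.mpr goldenConj_ne_zero
  calc m * |ψ| ^ (j + 4) + |ψ| < φ ^ j * |ψ| ^ (j + 4) + |ψ| := by gcongr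
    _ = |ψ| ^ 4 + |ψ| := by
        rw [pow_add, ← mul_assoc, mul_comm (φ ^ j), abs_goldenConj_pow_mul_goldenRatio_pow, one_mul]
    _ ≤ |ψ| ^ 2 + |ψ| := by
        gcongr ?_ + _
        exact pow_le_pow_of_le_one hpos.le abs_goldenConj_lt_one.le (by norm_num)
    _ = 1 := by rw [hsq]; ring

lemma sub_le_logb_goldenRatio_of_pow_le {a b : ℕ} {x : ℝ} (h : φ ^ a ≤ x * φ ^ b) :
    (a : ℝ) - b ≤ logb φ x := by
  have hx : 0 < x := by nlinarith [pow_pos goldenRatio_pos a, pow_pos goldenRatio_pos b]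
  rw [le_logb_iff_rpow_le one_lt_goldenRatio hx, rpow_sub goldenRatio_pos, rpow_natCast,
    rpow_natCast, div_le_iff₀ (pow_pos goldenRatio_pos b)]
  exact h

lemma zeckDigit_eq_zero_of_forall {n ℓ : ℕ} (h : ∀ δ, IsZeckRep n δ → δ ℓ = 0) :
    zeckDigit n ℓ = 0 := by
  unfold zeckDigit
  split_ifs with hex
  · exact h _ hex.choose_spec
  · rfl

theorem zeck_digits_mul_fib_general (m k : ℕ) (hmk : m < Nat.fib (k - 3)) :
    ∀ ℓ : ℕ, ((ℓ : ℝ) < (k : ℝ) - Real.logb phi m - 1 ∨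
        (k : ℝ) + Real.logb phi m + 2 < (ℓ : ℝ)) →
      zeckDigit (m * Nat.fib k) ℓ = 0 := by
  intro ℓ hℓ
  refine zeckDigit_eq_zero_of_forall fun δ hδ => ?_
  by_contra hne
  have hone : δ ℓ = 1 := by have := hδ.1 ℓ; omega
  rw [phi_eq_goldenRatio] at hℓ
  rcases hℓ with hlow | hhigh
  · have := sub_le_logb_goldenRatio_of_pow_le
      (hδ.pow_le_mul_pow_succ_of_small (mul_abs_goldenConj_pow_add_lt_one hmk) hone)
    push_cast at this
    linarith
  · have := sub_le_logb_goldenRatio_of_pow_le (hδ.pow_le_mul_pow_succ hone)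
    push_cast at this
    linarith

/-- For `0 < m < F_(k-3)`, the Zeckendorf digits of `m·F_k` vanish at all indices
`ℓ < k - log_φ m - 1` and all indices `ℓ > k + log_φ m + 2`. -/
theorem zeck_digits_mul_fib (m k : ℕ) (hm : 0 < m) (hmk : m < Nat.fib (k - 3)) :
    ∀ ℓ : ℕ, ((ℓ : ℝ) < (k : ℝ) - Real.logb phi m - 1 ∨
        (k : ℝ) + Real.logb phi m + 2 < (ℓ : ℝ)) →
      zeckDigit (m * Nat.fib k) ℓ = 0 :=
  zeck_digits_mul_fib_general m k hmk
end

section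
/- For every integer ℓ ≥ 2 and every n ∈ ℕ there exists 0 ≤ y < F_ℓ such that all Zeckendorf digits of n + y with index < ℓ vanish, i.e. v(n + y, ℓ) = 0. -/
/-!
Write `n = F_g + r` with `g` the greatest index such that `F_g ≤ n`, so that `r < F_{g-1}`, and
induct on `n`. If `g < ℓ`, then `n < F_ℓ` and the shift `y = F_ℓ - n` lands on `F_ℓ`. Otherwise
take the shift `y` that works for `r`: if `r + y < F_{g-1}`, the Zeckendorf representation of
`n + y` is `g` followed by that of `r + y`; if not, the shorter shift `F_{g-1} - r` gives
`n + y = F_g + F_{g-1} = F_{g+1}`.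

The digits of `zeckDigit` are read off `Nat.zeckendorf` through the uniqueness of Zeckendorf
representations.
-/

open Nat Finset

namespace Nat

lemma sub_fib_greatestFib_lt {n : ℕ} (hn : n ≠ 0) :
    n - fib (greatestFib n) < fib (greatestFib n - 1) := by
  have hlt := lt_fib_greatestFib_add_one n
  rw [fib_add_one (greatestFib_ne_zero.2 hn)] at hlt
  have := fib_greatestFib_le n
  omega

lemma zeckendorf_fib_add {g s : ℕ} (hg : g ≠ 0) (hs : s < fib (g - 1)) :
    zeckendorf (fib g + s) = g :: zeckendorf s := by
  have hgreatest : greatestFib (fib g + s) = g := by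
    refine le_antisymm (Nat.lt_succ_iff.1 (greatestFib_lt.2 ?_)) (le_greatestFib.2 le_self_add)
    rw [fib_add_one hg]
    omega
  rw [zeckendorf_of_pos (by have := fib_pos.2 (Nat.pos_of_ne_zero hg); omega), hgreatest,
    Nat.add_sub_cancel_left]

lemma zeckendorf_fib {g : ℕ} (hg : 2 ≤ g) : zeckendorf (fib g) = [g] := by
  simpa using zeckendorf_fib_add (g := g) (s := 0) (by omega) (fib_pos.2 (by omega))

theorem exists_lt_fib_forall_mem_zeckendorf_add_ge {ℓ : ℕ} (hℓ : 2 ≤ ℓ) (n : ℕ) :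
    ∃ y < fib ℓ, ∀ k ∈ zeckendorf (n + y), ℓ ≤ k := by
  induction n using Nat.strong_induction_on with
  | _ n ih =>
  rcases eq_or_ne n 0 with rfl | hn
  · exact ⟨0, fib_pos.2 (by omega), by simp⟩
  set g := greatestFib n
  set r := n - fib g
  have hg : g ≠ 0 := greatestFib_ne_zero.2 hn
  have hr : r < fib (g - 1) := sub_fib_greatestFib_lt hn
  have hnr : n = fib g + r := (Nat.add_sub_of_le (fib_greatestFib_le n)).symm
  by_cases hgℓ : g < ℓ
  · have hnℓ : n < fib ℓ := greatestFib_lt.1 hgℓ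
    refine ⟨fib ℓ - n, by omega, ?_⟩
    simp [Nat.add_sub_cancel' hnℓ.le, zeckendorf_fib hℓ]
  obtain ⟨y, hyℓ, hy⟩ := ih r (by have := fib_pos.2 (Nat.pos_of_ne_zero hg); omega)
  by_cases hcarry : r + y < fib (g - 1)
  · refine ⟨y, hyℓ, ?_⟩
    rw [show n + y = fib g + (r + y) by omega, zeckendorf_fib_add hg hcarry]
    exact List.forall_mem_cons.2 ⟨by omega, hy⟩
  · refine ⟨fib (g - 1) - r, by omega, ?_⟩
    rw [show n + (fib (g - 1) - r) = fib (g + 1) by rw [fib_add_one hg]; omega,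
      zeckendorf_fib (by omega)]
    simp only [List.mem_singleton, forall_eq]
    omega

end Nat

lemma Finset.sum_smul_eq_sum_filter_of_le_one {ι M : Type*} [AddCommMonoid M] (s : Finset ι)
    {δ : ι → ℕ} (hδ : ∀ i, δ i ≤ 1) (f : ι → M) :
    ∑ i ∈ s, δ i • f i = ∑ i ∈ s with δ i = 1, f i := by
  rw [sum_filter]
  refine sum_congr rfl fun i _ => ?_
  rcases Nat.le_one_iff_eq_zero_or_eq_one.1 (hδ i) with h | h <;> simp [h]

lemma IsZeckRep.mem_zeckendorf_iff {n : ℕ} {δ : ℕ → ℕ} (h : IsZeckRep n δ) (k : ℕ) :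
    k ∈ n.zeckendorf ↔ δ k = 1 := by
  obtain ⟨hle, hlow, hcons, L, hL, hsum⟩ := h
  set s := (range (L + 1)).filter (δ · = 1)
  have hs : ∀ k, k ∈ s ↔ δ k = 1 := fun k => by
    simp only [s, mem_filter, mem_range, and_iff_right_iff_imp]
    intro hk
    by_contra hkL
    simp [hL k (by omega)] at hk
  have hrep : (s.sort (· ≥ ·)).IsZeckendorfRep := by
    refine List.Pairwise.isChain (List.pairwise_append.2 ⟨?_, by simp, ?_⟩)
    · refine ((sortedGT_sort s).pairwise).imp_of_mem fun {a b} ha hb hab => ?_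
      rw [mem_sort, hs] at ha hb
      have : a ≠ b + 1 := fun hab' => by simp [hcons b (hab' ▸ ha)] at hb
      omega
    · intro a ha b hb
      rw [mem_sort, hs] at ha
      rw [List.mem_singleton.1 hb, zero_add]
      by_contra ha2
      simp [hlow a (by omega)] at ha
  have hsum' : ((s.sort (· ≥ ·)).map fib).sum = n := by
    rw [← List.sum_toFinset _ (sort_nodup _ _), sort_toFinset, hsum]
    simpa using (sum_smul_eq_sum_filter_of_le_one (range (L + 1)) hle fib).symm
  rw [← hsum', zeckendorf_sum_fib hrep, mem_sort, hs]

lemma zeckDigit_eq_zero_of_notMem {n k : ℕ} (hk : k ∉ n.zeckendorf) : zeckDigit n k = 0 := by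
  unfold zeckDigit
  split_ifs with h
  · have := h.choose_spec.1 k
    have := (h.choose_spec.mem_zeckendorf_iff k).not.1 hk
    omega
  · rfl

/-- For every `ℓ ≥ 2` and every `n` there exists `0 ≤ y < F_ℓ` such that all Zeckendorf
digits of `n + y` with index `< ℓ` vanish, i.e. `v (n + y) ℓ = 0`. -/
theorem create_zeros (ℓ n : ℕ) (hℓ : 2 ≤ ℓ) :
    ∃ y : ℕ, y < Nat.fib ℓ ∧
      ∑ k ∈ Finset.Ico 2 ℓ, zeckDigit (n + y) k * Nat.fib k = 0 := by
  obtain ⟨y, hyℓ, hy⟩ := exists_lt_fib_forall_mem_zeckendorf_add_ge hℓ n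
  refine ⟨y, hyℓ, sum_eq_zero fun k hk => ?_⟩
  have hk' : k ∉ (n + y).zeckendorf := fun hmem => (mem_Ico.1 hk).2.not_ge (hy k hmem)
  rw [zeckDigit_eq_zero_of_notMem hk', zero_mul]
end

section
/- For any real numbers x_1, ..., x_{k−1}: k − |1 + e(x_1) + ... + e(x_{k−1})| ≥ max_{1≤i<k} ‖x_i‖², where e(x) = exp(2πi x) and ‖x‖ is the distance from x to the nearest integer. -/
/-!
Isolating the term `e(xᵢ)`, the triangle inequality bounds `|1 + e(x₁) + ⋯ + e(x_(k−1))|` by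
`|1 + e(xᵢ)| + (k − 2)`. Moreover `|1 + e(x)|² = 2 + 2 cos 2πx`, and the concavity bound
`cos θ ≤ 1 − 2θ²/π²` on `[−π, π]`, applied to `θ = 2π(x − round x)`, gives `cos 2πx ≤ 1 − 8‖x‖²`.
Hence `|1 + e(x)|² ≤ 4 − 16‖x‖² ≤ (2 − ‖x‖²)²`.
-/

open Complex Finset Real

theorem Complex.sq_norm_one_add_exp_ofReal_mul_I (θ : ℝ) :
    ‖1 + exp (θ * I)‖ ^ 2 = 2 + 2 * Real.cos θ := by
  rw [Complex.sq_norm, normSq_add, normSq_one, ← Complex.sq_norm, norm_exp_ofReal_mul_I, one_mul,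
    conj_re, exp_ofReal_mul_I_re]
  ring

theorem Real.cos_two_pi_mul_le (x : ℝ) :
    Real.cos (2 * π * x) ≤ 1 - 8 * (x - round x) ^ 2 := by
  have hcos : Real.cos (2 * π * x) = Real.cos (2 * π * (x - round x)) := by
    rw [← Real.cos_sub_int_mul_two_pi _ (round x)]
    ring_nf
  have hle : |2 * π * (x - round x)| ≤ π := by
    rw [abs_mul, abs_of_pos (by positivity)]
    nlinarith [abs_sub_round x, pi_pos]
  calc Real.cos (2 * π * x) ≤ 1 - 2 / π ^ 2 * (2 * π * (x - round x)) ^ 2 :=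
        hcos ▸ Real.cos_le_one_sub_mul_cos_sq hle
    _ = 1 - 8 * (x - round x) ^ 2 := by field_simp; ring

theorem Complex.norm_one_add_exp_two_pi_mul_I_le (x : ℝ) :
    ‖1 + exp (2 * π * I * x)‖ ≤ 2 - |x - round x| ^ 2 := by
  have hsq : |x - round x| ^ 2 ≤ 1 / 4 := by
    nlinarith [abs_sub_round x, abs_nonneg (x - round x)]
  refine le_of_pow_le_pow_left₀ two_ne_zero (by linarith) ?_
  have h := Complex.sq_norm_one_add_exp_ofReal_mul_I (2 * π * x)
  push_cast at h
  rw [show 2 * π * I * x = 2 * π * x * I by ring, h]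
  nlinarith [Real.cos_two_pi_mul_le x, sq_abs (x - round x)]

theorem norm_add_sum_le_of_norm_le_one {E ι : Type*} [SeminormedAddCommGroup E]
    {s : Finset ι} {i : ι} (hi : i ∈ s) (a : E) {f : ι → E} (hf : ∀ j ∈ s, ‖f j‖ ≤ 1) :
    ‖a + ∑ j ∈ s, f j‖ ≤ ‖a + f i‖ + (#s - 1) := by
  classical
  rw [← add_sum_erase s f hi, ← add_assoc, ← cast_card_erase_of_mem hi]
  calc ‖a + f i + ∑ j ∈ s.erase i, f j‖
      ≤ ‖a + f i‖ + ∑ j ∈ s.erase i, ‖f j‖ :=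
        (norm_add_le _ _).trans (by gcongr; exact norm_sum_le _ _)
    _ ≤ ‖a + f i‖ + #(s.erase i) := by
      gcongr
      simpa using sum_le_card_nsmul _ _ 1 fun j hj => hf j (mem_of_mem_erase hj)

/-- For real numbers `x₁, …, x_(k−1)`:
`k − |1 + e(x₁) + ⋯ + e(x_(k−1))| ≥ max ‖x i‖²`, where `e(x) = exp(2πix)`
and `‖x‖` is the distance from `x` to the nearest integer. -/
theorem angle_estimate (k : ℕ) (hk : 2 ≤ k) (x : ℕ → ℝ) :
    (Finset.Icc 1 (k - 1)).sup' (Finset.nonempty_Icc.mpr (by omega))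
        (fun i => |x i - round (x i)| ^ 2) ≤
      (k : ℝ) - ‖1 + ∑ j ∈ Finset.Icc 1 (k - 1),
        Complex.exp (2 * Real.pi * Complex.I * (x j : ℂ))‖ := by
  refine Finset.sup'_le _ _ fun i hi => ?_
  have hsum := norm_add_sum_le_of_norm_le_one hi 1
    (f := fun j => Complex.exp (2 * π * I * x j)) fun j _ => by
      rw [show 2 * π * I * x j = (2 * π * x j : ℝ) * I by push_cast; ring, norm_exp_ofReal_mul_I]
  have hcard : (#(Icc 1 (k - 1)) : ℝ) = k - 1 := by
    rw [Nat.card_Icc, Nat.add_sub_cancel, Nat.cast_sub (by omega), Nat.cast_one]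
  linarith [Complex.norm_one_add_exp_two_pi_mul_I_le (x i)]
end

section
/- Let (Z_k) be the stationary Markov chain on {0,1} with initial distribution P[Z_0=0] = φ²/(φ²+1), P[Z_0=1] = 1/(φ²+1) and transition probabilities P[Z_{k+1}=0 | Z_k=0] = 1/φ, P[Z_{k+1}=1 | Z_k=0] = 1/φ², P[Z_{k+1}=0 | Z_k=1] = 1, P[Z_{k+1}=1 | Z_k=1] = 0. Then S_n = Z_1 + ... + Z_n satisfies E[S_n] = n/(φ²+1) and Var(S_n) = n·φ³/(φ²+1)³ + 2/25 − (2/25)·(−φ^{-2})^n. -/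
/-- Initial (stationary) distribution of the Markov chain `(Z k)` on `{0,1}`. -/
noncomputable def zInit : Fin 2 → ℝ := fun b =>
  if b = 0 then phi ^ 2 / (phi ^ 2 + 1) else 1 / (phi ^ 2 + 1)

/-- Transition probabilities of the Markov chain `(Z k)` on `{0,1}`. -/
noncomputable def zTrans : Fin 2 → Fin 2 → ℝ := fun a b =>
  if a = 0 then (if b = 0 then 1 / phi else 1 / phi ^ 2)
  else (if b = 0 then 1 else 0)

/-- The probability of the path `(Z 0, …, Z n) = (z 0, …, z n)` of the Markov chain. -/
noncomputable def pathProb (n : ℕ) (z : Fin (n + 1) → Fin 2) : ℝ :=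
  zInit (z 0) * ∏ i : Fin n, zTrans (z i.castSucc) (z i.succ)

/-- The value `S n = Z 1 + ⋯ + Z n` along a path. -/
def pathSum (n : ℕ) (z : Fin (n + 1) → Fin 2) : ℕ := ∑ i : Fin n, (z i.succ : ℕ)

open Finset

namespace Markov

variable {σ : Type*} (μ : σ → ℝ) (T : σ → σ → ℝ) (f : σ → ℝ)

def pathWeight (n : ℕ) (z : Fin (n + 1) → σ) : ℝ :=
  μ (z 0) * ∏ i : Fin n, T (z i.castSucc) (z i.succ)

def pathAdditive (n : ℕ) (z : Fin (n + 1) → σ) : ℝ := ∑ i : Fin n, f (z i.succ)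

theorem pathWeight_snoc (n : ℕ) (z : Fin (n + 1) → σ) (b : σ) :
    pathWeight μ T (n + 1) (Fin.snoc z b) = pathWeight μ T n z * T (z (Fin.last n)) b := by
  simp only [pathWeight, Fin.prod_univ_castSucc, ← Fin.castSucc_zero, Fin.snoc_castSucc,
    Fin.succ_castSucc, Fin.succ_last, Fin.snoc_last, mul_assoc]

theorem pathAdditive_snoc (n : ℕ) (z : Fin (n + 1) → σ) (b : σ) :
    pathAdditive f (n + 1) (Fin.snoc z b) = pathAdditive f n z + f b := by
  simp only [pathAdditive, Fin.sum_univ_castSucc, Fin.succ_castSucc, Fin.snoc_castSucc,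
    Fin.succ_last, Fin.snoc_last]

variable [Fintype σ]

theorem sum_snoc {M : Type*} [AddCommMonoid M] (n : ℕ) (G : (Fin (n + 2) → σ) → M) :
    ∑ z, G z = ∑ z : Fin (n + 1) → σ, ∑ b, G (Fin.snoc z b) := by
  rw [← (Fin.snocEquiv fun _ => σ).sum_comp, Fintype.sum_prod_type_right]
  rfl

variable [DecidableEq σ]

def endMoment (F : ℝ → ℝ) (n : ℕ) (a : σ) : ℝ :=
  ∑ z with z (Fin.last n) = a, pathWeight μ T n z * F (pathAdditive f n z)

theorem sum_endMoment (F : ℝ → ℝ) (n : ℕ) :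
    ∑ a, endMoment μ T f F n a = ∑ z, pathWeight μ T n z * F (pathAdditive f n z) :=
  sum_fiberwise _ _ _

theorem endMoment_succ (F : ℝ → ℝ) (n : ℕ) (b : σ) :
    endMoment μ T f F (n + 1) b =
      ∑ a, endMoment μ T f (fun s => F (s + f b)) n a * T a b := by
  simp only [endMoment, sum_mul]
  rw [sum_filter, sum_snoc]
  simp only [Fin.snoc_last, pathWeight_snoc, pathAdditive_snoc, sum_ite_eq', mem_univ, if_true]
  rw [← sum_fiberwise univ (fun z => z (Fin.last n))]
  refine sum_congr rfl fun a _ => sum_congr rfl fun z hz => ?_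
  rw [(mem_filter.1 hz).2, mul_right_comm]

theorem endMoment_zero (F : ℝ → ℝ) (a : σ) : endMoment μ T f F 0 a = μ a * F 0 := by
  rw [endMoment, sum_filter, ← (Equiv.funUnique (Fin 1) σ).symm.sum_comp]
  simp [pathWeight, pathAdditive]

theorem endMoment_add_mul (F G : ℝ → ℝ) (c : ℝ) (n : ℕ) (a : σ) :
    endMoment μ T f (fun s => F s + c * G s) n a =
      endMoment μ T f F n a + c * endMoment μ T f G n a := by
  simp only [endMoment, mul_add, sum_add_distrib, mul_sum, mul_left_comm c]

variable {μ T} in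
theorem endMoment_const_one (hstat : ∀ b, ∑ a, μ a * T a b = μ b) (n : ℕ) (a : σ) :
    endMoment μ T f (fun _ => 1) n a = μ a := by
  induction n generalizing a with
  | zero => simp [endMoment_zero]
  | succ n ih => simp only [endMoment_succ, ih, hstat]

def centeredMoment (m : ℝ) (k n : ℕ) (a : σ) : ℝ :=
  endMoment μ T f (fun s => (s - n * m) ^ k) n a

section Stationary

variable {μ T f} {m : ℝ} (hstat : ∀ b, ∑ a, μ a * T a b = μ b)
include hstat

theorem centeredMoment_one_succ (n : ℕ) (b : σ) :
    centeredMoment μ T f m 1 (n + 1) b =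
      ∑ a, centeredMoment μ T f m 1 n a * T a b + (f b - m) * μ b := by
  have hshift : (fun s => (s + f b - ((n + 1 : ℕ) : ℝ) * m) ^ 1) =
      fun s => (s - n * m) ^ 1 + (f b - m) * 1 := by
    funext s; push_cast; ring
  simp only [centeredMoment, endMoment_succ, hshift, endMoment_add_mul,
    endMoment_const_one f hstat, add_mul, sum_add_distrib, mul_assoc, ← mul_sum, hstat]

theorem centeredMoment_two_succ (n : ℕ) (b : σ) :
    centeredMoment μ T f m 2 (n + 1) b =
      ∑ a, (centeredMoment μ T f m 2 n a + 2 * (f b - m) * centeredMoment μ T f m 1 n a) * T a b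
        + (f b - m) ^ 2 * μ b := by
  have hshift : (fun s => (s + f b - ((n + 1 : ℕ) : ℝ) * m) ^ 2) =
      fun s => ((s - n * m) ^ 2 + (2 * (f b - m)) * (s - n * m) ^ 1) + (f b - m) ^ 2 * 1 := by
    funext s; push_cast; ring
  simp only [centeredMoment, endMoment_succ, hshift, endMoment_add_mul,
    endMoment_const_one f hstat]
  simp only [add_mul, sum_add_distrib, mul_assoc, ← mul_sum, hstat]

theorem sum_centeredMoment_one_succ (hrow : ∀ a, ∑ b, T a b = 1) (hμ : ∑ a, μ a = 1)
    (hm : ∑ a, μ a * f a = m) (n : ℕ) :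
    ∑ b, centeredMoment μ T f m 1 (n + 1) b = ∑ a, centeredMoment μ T f m 1 n a := by
  have hcentered : ∑ b, (f b - m) * μ b = 0 := by
    simp only [sub_mul, sum_sub_distrib, ← mul_sum, mul_comm (f _), hm, hμ, mul_one, sub_self]
  simp only [centeredMoment_one_succ hstat, sum_add_distrib, hcentered, add_zero]
  rw [sum_comm]
  simp only [← mul_sum, hrow, mul_one]

theorem sum_centeredMoment_one (hrow : ∀ a, ∑ b, T a b = 1) (hμ : ∑ a, μ a = 1)
    (hm : ∑ a, μ a * f a = m) (n : ℕ) : ∑ a, centeredMoment μ T f m 1 n a = 0 := by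
  induction n with
  | zero => simp [centeredMoment, endMoment_zero]
  | succ n ih => rw [sum_centeredMoment_one_succ hstat hrow hμ hm, ih]

theorem sum_pathWeight_mul_pathAdditive (hrow : ∀ a, ∑ b, T a b = 1) (hμ : ∑ a, μ a = 1)
    (hm : ∑ a, μ a * f a = m) (n : ℕ) :
    ∑ z, pathWeight μ T n z * pathAdditive f n z = n * m := by
  have hcentered := sum_centeredMoment_one hstat hrow hμ hm n
  have hmass := sum_endMoment μ T f (fun _ => 1) n
  simp only [endMoment_const_one f hstat, hμ, mul_one] at hmass
  simp only [centeredMoment, sum_endMoment, pow_one, mul_sub, sum_sub_distrib, ← sum_mul,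
    ← hmass] at hcentered
  linear_combination hcentered

variable {ρ : ℝ} (heig : ∀ a, ∑ b, T a b * (f b - m) = ρ * (f a - m))
include heig

theorem sum_centeredMoment_one_mul_succ (n : ℕ) :
    ∑ b, centeredMoment μ T f m 1 (n + 1) b * (f b - m) =
      ρ * ∑ a, centeredMoment μ T f m 1 n a * (f a - m) + ∑ a, μ a * (f a - m) ^ 2 := by
  simp only [centeredMoment_one_succ hstat, add_mul, sum_add_distrib, sum_mul]
  rw [sum_comm]
  congr 1
  · rw [mul_sum]
    refine sum_congr rfl fun a _ => ?_
    calc _ = centeredMoment μ T f m 1 n a * ∑ b, T a b * (f b - m) := by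
          rw [mul_sum]; exact sum_congr rfl fun b _ => by ring
      _ = _ := by rw [heig]; ring
  · exact sum_congr rfl fun b _ => by ring

theorem sum_centeredMoment_two_succ (hrow : ∀ a, ∑ b, T a b = 1) (n : ℕ) :
    ∑ b, centeredMoment μ T f m 2 (n + 1) b =
      ∑ a, centeredMoment μ T f m 2 n a
        + 2 * ρ * ∑ a, centeredMoment μ T f m 1 n a * (f a - m) + ∑ a, μ a * (f a - m) ^ 2 := by
  simp only [centeredMoment_two_succ hstat, add_mul, sum_add_distrib]
  congr 2
  · rw [sum_comm]
    simp only [← mul_sum, hrow, mul_one]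
  · rw [sum_comm, mul_sum]
    refine sum_congr rfl fun a _ => ?_
    calc _ = 2 * centeredMoment μ T f m 1 n a * ∑ b, T a b * (f b - m) := by
          rw [mul_sum]; exact sum_congr rfl fun b _ => by ring
      _ = _ := by rw [heig]; ring
  · funext b
    ring

theorem one_sub_mul_sum_centeredMoment_one_mul (n : ℕ) :
    (1 - ρ) * ∑ a, centeredMoment μ T f m 1 n a * (f a - m) =
      (∑ a, μ a * (f a - m) ^ 2) * (1 - ρ ^ n) := by
  induction n with
  | zero => simp [centeredMoment, endMoment_zero]
  | succ n ih =>
    rw [sum_centeredMoment_one_mul_succ hstat heig]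
    linear_combination ρ * ih

theorem one_sub_sq_mul_sum_centeredMoment_two (hrow : ∀ a, ∑ b, T a b = 1) (n : ℕ) :
    (1 - ρ) ^ 2 * ∑ a, centeredMoment μ T f m 2 n a =
      (∑ a, μ a * (f a - m) ^ 2) * (n * (1 - ρ ^ 2) - 2 * ρ * (1 - ρ ^ n)) := by
  induction n with
  | zero => simp [centeredMoment, endMoment_zero]
  | succ n ih =>
    rw [sum_centeredMoment_two_succ hstat heig hrow]
    push_cast
    linear_combination ih + 2 * ρ * (1 - ρ) * one_sub_mul_sum_centeredMoment_one_mul hstat heig n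

theorem one_sub_sq_mul_sum_pathWeight_mul_sq (hrow : ∀ a, ∑ b, T a b = 1) (n : ℕ) :
    (1 - ρ) ^ 2 * ∑ z, pathWeight μ T n z * (pathAdditive f n z - n * m) ^ 2 =
      (∑ a, μ a * (f a - m) ^ 2) * (n * (1 - ρ ^ 2) - 2 * ρ * (1 - ρ ^ n)) := by
  have h := one_sub_sq_mul_sum_centeredMoment_two hstat heig hrow n
  simpa only [centeredMoment, sum_endMoment] using h

end Stationary

end Markov

theorem phi_sq : phi ^ 2 = phi + 1 := Real.goldenRatio_sq

theorem phi_pos : 0 < phi := Real.goldenRatio_pos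

theorem zInit_zero : zInit 0 = phi ^ 2 / (phi ^ 2 + 1) := rfl

theorem zInit_one : zInit 1 = 1 / (phi ^ 2 + 1) := rfl

theorem zTrans_zero_zero : zTrans 0 0 = 1 / phi := rfl

theorem zTrans_zero_one : zTrans 0 1 = 1 / phi ^ 2 := rfl

theorem zTrans_one_zero : zTrans 1 0 = 1 := rfl

theorem zTrans_one_one : zTrans 1 1 = 0 := rfl

theorem sum_zInit : ∑ a, zInit a = 1 := by
  rw [Fin.sum_univ_two, zInit_zero, zInit_one]
  field_simp

theorem sum_zInit_mul_zTrans : ∀ b, ∑ a, zInit a * zTrans a b = zInit b := by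
  have := phi_pos.ne'
  simp only [Fin.forall_fin_two, Fin.sum_univ_two, zInit_zero, zInit_one, zTrans_zero_zero,
    zTrans_zero_one, zTrans_one_zero, zTrans_one_one]
  constructor
  · field_simp
    linear_combination -phi_sq
  · field_simp
    ring

theorem sum_zTrans : ∀ a, ∑ b, zTrans a b = 1 := by
  have := phi_pos.ne'
  simp only [Fin.forall_fin_two, Fin.sum_univ_two, zTrans_zero_zero, zTrans_zero_one,
    zTrans_one_zero, zTrans_one_one]
  constructor
  · field_simp
    linear_combination -phi_sq
  · ring

theorem sum_zInit_mul_val : ∑ a : Fin 2, zInit a * (a : ℕ) = 1 / (phi ^ 2 + 1) := by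
  simp [Fin.sum_univ_two, zInit_one]

theorem sum_zTrans_mul_val_sub :
    ∀ a : Fin 2, ∑ b : Fin 2, zTrans a b * ((b : ℕ) - 1 / (phi ^ 2 + 1)) =
      -(1 / phi ^ 2) * ((a : ℕ) - 1 / (phi ^ 2 + 1)) := by
  have := phi_pos.ne'
  simp only [Fin.forall_fin_two, Fin.sum_univ_two, zTrans_zero_zero, zTrans_zero_one,
    zTrans_one_zero, zTrans_one_one, Fin.val_zero, Fin.val_one, Nat.cast_zero, Nat.cast_one]
  constructor
  · field_simp
    linear_combination phi_sq
  · field_simp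
    ring

theorem sum_zInit_mul_val_sub_sq :
    ∑ a : Fin 2, zInit a * ((a : ℕ) - 1 / (phi ^ 2 + 1)) ^ 2 = phi ^ 2 / (phi ^ 2 + 1) ^ 2 := by
  simp only [Fin.sum_univ_two, zInit_zero, zInit_one, Fin.val_zero, Fin.val_one, Nat.cast_zero,
    Nat.cast_one]
  field_simp
  ring

theorem pathProb_eq_pathWeight : pathProb = Markov.pathWeight zInit zTrans := rfl

theorem pathSum_eq_pathAdditive (n : ℕ) (z : Fin (n + 1) → Fin 2) :
    (pathSum n z : ℝ) = Markov.pathAdditive (fun b : Fin 2 => ((b : ℕ) : ℝ)) n z := by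
  simp [pathSum, Markov.pathAdditive]

theorem markov_sum_mean_and_variance_general (n : ℕ) :
    (∑ z : Fin (n + 1) → Fin 2, pathProb n z * (pathSum n z : ℝ)) =
        (n : ℝ) / (phi ^ 2 + 1) ∧
      (∑ z : Fin (n + 1) → Fin 2,
          pathProb n z * ((pathSum n z : ℝ) - (n : ℝ) / (phi ^ 2 + 1)) ^ 2) =
        (n : ℝ) * phi ^ 3 / (phi ^ 2 + 1) ^ 3 + 2 / 25 -
          (2 / 25) * (-(1 / phi ^ 2)) ^ n := by
  simp only [pathSum_eq_pathAdditive, pathProb_eq_pathWeight]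
  have hmean := Markov.sum_pathWeight_mul_pathAdditive sum_zInit_mul_zTrans sum_zTrans sum_zInit
    sum_zInit_mul_val n
  have hvar := Markov.one_sub_sq_mul_sum_pathWeight_mul_sq sum_zInit_mul_zTrans
    sum_zTrans_mul_val_sub sum_zTrans n
  rw [sum_zInit_mul_val_sub_sq] at hvar
  simp only [mul_one_div] at hmean hvar
  refine ⟨hmean, ?_⟩
  set ρ : ℝ := -(1 / phi ^ 2) with hρ
  have hφ := phi_pos.ne'
  -- `φ² + 1 = √5 φ`: this is where the constant `2/25` comes from.
  have hs : (phi ^ 2 + 1) ^ 2 = 5 * phi ^ 2 := by linear_combination (phi ^ 2 + phi - 1) * phi_sq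
  -- the coefficients of `n` and of `1 - ρⁿ` on both sides agree
  have hlinear : (1 - ρ) ^ 2 * (phi ^ 3 / (phi ^ 2 + 1) ^ 3) =
      phi ^ 2 / (phi ^ 2 + 1) ^ 2 * (1 - ρ ^ 2) := by
    rw [hρ]
    field_simp
    linear_combination -(phi ^ 2 + 1) ^ 2 * phi_sq
  have hconst : (1 - ρ) ^ 2 * (2 / 25) = phi ^ 2 / (phi ^ 2 + 1) ^ 2 * (-2 * ρ) := by
    rw [hρ]
    field_simp
    linear_combination (phi ^ 4 + 7 * phi ^ 2 + 1) * hs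
  have hgap : (1 - ρ) ^ 2 ≠ 0 := by rw [hρ, sub_neg_eq_add]; positivity
  refine mul_left_cancel₀ hgap (hvar.trans ?_)
  linear_combination -n * hlinear - (1 - ρ ^ n) * hconst

/-- Mean and variance of `S n = Z 1 + ⋯ + Z n` for the stationary Markov chain:
`E[S n] = n/(φ²+1)` and `Var(S n) = n·φ³/(φ²+1)³ + 2/25 − (2/25)·(−φ^(-2))^n`. -/
theorem markov_sum_mean_and_variance (n : ℕ) (hn : 1 ≤ n) :
    (∑ z : Fin (n + 1) → Fin 2, pathProb n z * (pathSum n z : ℝ)) =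
        (n : ℝ) / (phi ^ 2 + 1) ∧
      (∑ z : Fin (n + 1) → Fin 2,
          pathProb n z * ((pathSum n z : ℝ) - (n : ℝ) / (phi ^ 2 + 1)) ^ 2) =
        (n : ℝ) * phi ^ 3 / (phi ^ 2 + 1) ^ 3 + 2 / 25 -
          (2 / 25) * (-(1 / phi ^ 2)) ^ n :=
  markov_sum_mean_and_variance_general n
end

section
/- For integers 2 ≤ a < b, digits ν_a, ..., ν_{b−1} ∈ {0,1} with ν_{j+1} = 1 ⟹ ν_j = 0, set M = Σ_{a≤j<b} ν_j F_j, W = F_a if ν_a = 0 and W = F_{a−1} otherwise, and α = −φ if ν_{b−1} = 0 and α = −1/φ otherwise. Define A = {(x,y) ∈ ℝ² : M ≤ F_{b+1}x + F_b y < M + W and α ≤ −x/φ + y < 1}. Then for all n ≥ 0: δ_j(n) = ν_j for all a ≤ j < b if and only if (n/φ^b, n/φ^{b+1}) ∈ A + ℤ². -/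
/-!
Write `n = S + H` with `S = ∑_{k<b} δ_k F_k < F_b` the low part of the Zeckendorf expansion.
Since `F_{b+i} = F_{b+1} F_i + F_b F_{i-1}`, the high part is `H = F_{b+1} p₀ + F_b q₀` with
`q₀ - p₀/φ = ∑ δ_{b+i} ψ^i ∈ (-1, φ]`. Because `F_{b+1}/φ^b + F_b/φ^{b+1} = 1`, subtracting
`(p, q) ∈ ℤ²` from `(n/φ^b, n/φ^{b+1})` turns the two linear forms of the parallelogram into
`c = n - F_{b+1} p - F_b q` and `-τ` with `τ = q - p/φ`. The digits on `[a, b)` are `ν` iff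
`S ∈ [M, M + W)`, so `(p₀, q₀)` witnesses the forward direction. Conversely, `(p, q)` and
`(p₀, q₀)` both land in the region `0 ≤ c < F_b`, `-1 < τ ≤ φ`, with `τ ≤ 1/φ` once
`c ≥ F_{b-1}`. This region has area `φ^b`, the covolume of the lattice
`{(F_{b+1} p + F_b q, q - p/φ)}`, and is a fundamental domain for it, so `(p, q) = (p₀, q₀)`
and `c = S`.
-/

open Finset Real
open Nat (fib fib_add fib_add_two fib_le_fib_succ fib_mono)
open scoped goldenRatio

lemma exists_isZeckRep (n : ℕ) : ∃ δ, IsZeckRep n δ := by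
  classical
  set l := n.zeckendorf
  have : IsTrans ℕ fun a b ↦ b + 2 ≤ a := ⟨fun _ _ _ hba hcb ↦ hcb.trans (le_self_add.trans hba)⟩
  have hl : (l ++ [0]).Pairwise fun a b ↦ b + 2 ≤ a :=
    List.isChain_iff_pairwise.1 (Nat.isZeckendorfRep_zeckendorf n)
  simp only [List.pairwise_append, List.mem_singleton, forall_eq, zero_add] at hl
  obtain ⟨hl, -, hge⟩ := hl
  have : Std.Symm fun a b : ℕ ↦ a + 2 ≤ b ∨ b + 2 ≤ a := ⟨fun _ _ ↦ Or.symm⟩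
  have hsym : l.Pairwise fun a b ↦ a + 2 ≤ b ∨ b + 2 ≤ a := hl.imp Or.inr
  have hle : ∀ k ∈ l, k ≤ l.sum := fun k hk ↦ List.le_sum_of_mem hk
  refine ⟨fun k ↦ if k ∈ l then 1 else 0, fun k ↦ ?_, fun k hk ↦ ?_, fun k hk ↦ ?_, l.sum,
    fun k hk ↦ ?_, ?_⟩ <;> dsimp only at *
  · split <;> simp
  · exact if_neg fun h ↦ by have := hge k h; omega
  · have hk1 : k + 1 ∈ l := by by_contra h; simp [h] at hk
    exact if_neg fun h ↦ by have := hsym.forall hk1 h (by omega); omega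
  · exact if_neg fun h ↦ by have := hle k h; omega
  · have hsub : l.toFinset ⊆ range (l.sum + 1) := fun k hk ↦
      mem_range_succ_iff.2 (hle k (List.mem_toFinset.1 hk))
    simp only [ite_mul, one_mul, zero_mul, ← List.mem_toFinset]
    rw [Finset.sum_ite_mem, Finset.inter_eq_right.2 hsub,
      List.sum_toFinset _ (hl.imp (by omega)), Nat.sum_zeckendorf_fib]

lemma isZeckRep_zeckDigit (n : ℕ) : IsZeckRep n (zeckDigit n) := by
  have h := exists_isZeckRep n
  rw [show zeckDigit n = h.choose from funext fun k ↦ dif_pos h]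
  exact h.choose_spec

structure IsZeckDigits (δ : ℕ → ℕ) : Prop where
  le_one : ∀ k, δ k ≤ 1
  zero_of_lt_two : ∀ k < 2, δ k = 0
  eq_zero_of_succ_eq_one : ∀ k, δ (k + 1) = 1 → δ k = 0

lemma IsZeckRep.isZeckDigits {n : ℕ} {δ : ℕ → ℕ} (h : IsZeckRep n δ) : IsZeckDigits δ :=
  ⟨h.1, h.2.1, h.2.2.1⟩

def blockSum (ν : ℕ → ℕ) (a b : ℕ) : ℕ := ∑ j ∈ Ico a b, ν j * fib j

def blockWidth (ν : ℕ → ℕ) (a : ℕ) : ℕ := if ν a = 0 then fib a else fib (a - 1)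

section block

variable {ν : ℕ → ℕ} {a b : ℕ}

@[simp] lemma blockSum_self : blockSum ν a a = 0 := by simp [blockSum]

lemma blockSum_succ (h : a ≤ b) : blockSum ν a (b + 1) = blockSum ν a b + ν b * fib b :=
  sum_Ico_succ_top h _

lemma blockSum_add_blockSum {c : ℕ} (hab : a ≤ b) (hbc : b ≤ c) :
    blockSum ν a b + blockSum ν b c = blockSum ν a c :=
  sum_Ico_consecutive _ hab hbc

lemma fib_add_fib_sub_one_le (a : ℕ) : fib a + fib (a - 1) ≤ fib (a + 1) := by
  rcases a with _ | a
  · simp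
  · rw [fib_add_two, add_comm, Nat.add_sub_cancel]

lemma blockSum_add_blockWidth_le (hν₁ : ∀ j, ν j ≤ 1)
    (hν₂ : ∀ j, a ≤ j → j + 1 < b → ν (j + 1) = 1 → ν j = 0) (hab : a ≤ b) :
    blockSum ν a b + blockWidth ν a ≤ fib b := by
  induction b using Nat.strong_induction_on with
  | _ b ih =>
  rcases hab.eq_or_lt with rfl | hlt
  · unfold blockWidth
    split
    · simp
    · simpa using fib_mono (Nat.sub_le a 1)
  obtain ⟨c, rfl⟩ : ∃ c, b = c + 1 := ⟨b - 1, by omega⟩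
  rw [blockSum_succ (by omega)]
  rcases Nat.le_one_iff_eq_zero_or_eq_one.1 (hν₁ c) with hc | hc
  · have := ih c (by omega) (fun j hj hjc ↦ hν₂ j hj (by omega)) (by omega)
    have := fib_le_fib_succ (n := c)
    rw [hc, zero_mul]
    omega
  rcases (Nat.lt_succ_iff.1 hlt).eq_or_lt with rfl | hac
  · have : blockWidth ν a = fib (a - 1) := if_neg (by omega)
    simpa [this, hc] using fib_add_fib_sub_one_le a
  · obtain ⟨d, rfl⟩ : ∃ d, c = d + 1 := ⟨c - 1, by omega⟩
    have hd : ν d = 0 := hν₂ d (by omega) (by omega) hc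
    have := ih d (by omega) (fun j hj hjd ↦ hν₂ j hj (by omega)) (by omega)
    have hfib : fib (d + 1 + 1) = fib d + fib (d + 1) := fib_add_two
    rw [blockSum_succ (by omega), hd, hc]
    omega

lemma blockSum_add_blockWidth_le_of_eq_zero (hν₁ : ∀ j, ν j ≤ 1)
    (hν₂ : ∀ j, a ≤ j → j + 1 < b + 1 → ν (j + 1) = 1 → ν j = 0) (hab : a ≤ b) (hb : ν b = 0) :
    blockSum ν a (b + 1) + blockWidth ν a ≤ fib b := by
  rw [blockSum_succ hab, hb, zero_mul, add_zero]
  exact blockSum_add_blockWidth_le hν₁ (fun j hj hjb ↦ hν₂ j hj (by omega)) hab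

end block

namespace IsZeckDigits

variable {δ ν : ℕ → ℕ} {a b : ℕ}

lemma eq_zero_or_eq_one (hδ : IsZeckDigits δ) (k : ℕ) : δ k = 0 ∨ δ k = 1 :=
  Nat.le_one_iff_eq_zero_or_eq_one.1 (hδ.le_one k)

lemma succ_eq_zero_of_eq_one (hδ : IsZeckDigits δ) {k : ℕ} (h : δ k = 1) : δ (k + 1) = 0 := by
  have := hδ.eq_zero_of_succ_eq_one k
  have := hδ.eq_zero_or_eq_one (k + 1)
  omega

lemma blockSum_lt_fib (hδ : IsZeckDigits δ) : ∀ {k : ℕ}, 0 < k → blockSum δ 0 k < fib k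
  | 1, _ => by simp [blockSum]
  | 2, _ => by simp [blockSum, sum_range_succ, hδ.zero_of_lt_two 1]
  | k + 3, _ => by
    have hfib : fib (k + 3) = fib (k + 1) + fib (k + 2) := fib_add_two
    rw [blockSum_succ (by omega)]
    rcases hδ.eq_zero_or_eq_one (k + 2) with h | h
    · have := hδ.blockSum_lt_fib (k := k + 2) (by omega)
      simp only [h, zero_mul]
      omega
    · have := hδ.blockSum_lt_fib (k := k + 1) (by omega)
      rw [blockSum_succ (by omega), hδ.eq_zero_of_succ_eq_one _ h, h]
      omega

lemma blockSum_succ_lt_fib (hδ : IsZeckDigits δ) {k : ℕ} (hk : 0 < k) (h : δ k = 0) :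
    blockSum δ 0 (k + 1) < fib k := by
  simpa [blockSum_succ, h] using hδ.blockSum_lt_fib hk

lemma blockSum_lt_blockWidth (hδ : IsZeckDigits δ) (ha : 2 ≤ a) (h : δ a = ν a) :
    blockSum δ 0 a < blockWidth ν a := by
  unfold blockWidth
  split_ifs with hν
  · exact hδ.blockSum_lt_fib (by omega)
  · obtain ⟨c, rfl⟩ : ∃ c, a = c + 1 := ⟨a - 1, by omega⟩
    have := hδ.eq_zero_of_succ_eq_one c (by have := hδ.le_one (c + 1); omega)
    simpa using hδ.blockSum_succ_lt_fib (by omega) this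

lemma eq_of_blockSum_mem (hδ : IsZeckDigits δ) (hν₁ : ∀ j, ν j ≤ 1) (ha : 0 < a) (hab : a ≤ b)
    (hν₂ : ∀ j, a ≤ j → j + 1 < b → ν (j + 1) = 1 → ν j = 0)
    (hS : blockSum δ 0 b ∈ Set.Ico (blockSum ν a b) (blockSum ν a b + blockWidth ν a)) :
    ∀ j ∈ Ico a b, δ j = ν j := by
  induction b, hab using Nat.le_induction with
  | base => simp
  | succ b hab ih =>
    have hν₂' : ∀ j, a ≤ j → j + 1 < b → ν (j + 1) = 1 → ν j = 0 :=
      fun j hj hjb ↦ hν₂ j hj (by omega)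
    have hbound := blockSum_add_blockWidth_le hν₁ hν₂' hab
    have hlt := hδ.blockSum_lt_fib (k := b) (by omega)
    rw [Set.mem_Ico, blockSum_succ hab, blockSum_succ (Nat.zero_le b)] at hS
    -- `S_b < F_b` and `M_b + W ≤ F_b` leave no room for a mismatch at `b`
    have hb : δ b = ν b := by
      rcases hδ.eq_zero_or_eq_one b with h | h <;>
        rcases Nat.le_one_iff_eq_zero_or_eq_one.1 (hν₁ b) with h' | h' <;>
        simp only [h, h', zero_mul, one_mul] at hS ⊢ <;> omega
    intro j hj
    rcases Nat.lt_or_eq_of_le (Nat.lt_succ_iff.1 (mem_Ico.1 hj).2) with hjb | rfl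
    · refine ih hν₂' ?_ j (mem_Ico.2 ⟨(mem_Ico.1 hj).1, hjb⟩)
      rw [hb] at hS
      exact ⟨by omega, by omega⟩
    · exact hb

theorem forall_eq_iff_blockSum_mem (hδ : IsZeckDigits δ) (hν₁ : ∀ j, ν j ≤ 1)
    (hν₂ : ∀ j, a ≤ j → j + 1 < b → ν (j + 1) = 1 → ν j = 0) (ha : 2 ≤ a) (hab : a < b) :
    (∀ j ∈ Ico a b, δ j = ν j) ↔
      blockSum δ 0 b ∈ Set.Ico (blockSum ν a b) (blockSum ν a b + blockWidth ν a) := by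
  refine ⟨fun h ↦ ?_, hδ.eq_of_blockSum_mem hν₁ (by omega) hab.le hν₂⟩
  have hsplit := blockSum_add_blockSum (ν := δ) (Nat.zero_le a) hab.le
  have hblock : blockSum δ a b = blockSum ν a b := sum_congr rfl fun j hj ↦ by rw [h j hj]
  have := hδ.blockSum_lt_blockWidth ha (h a (mem_Ico.2 ⟨le_rfl, hab⟩))
  rw [Set.mem_Ico]
  omega

end IsZeckDigits

lemma cast_fib_add (b i : ℕ) :
    (fib (b + i) : ℤ) = fib (b + 1) * fib i + fib b * (fib (i + 1) - fib i) := by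
  rcases i with _ | i
  · simp
  · rw [← add_assoc, fib_add, fib_add_two]
    push_cast; ring

lemma fib_succ_sub_fib_sub_div_goldenRatio (i : ℕ) :
    ((fib (i + 1) : ℝ) - fib i) - fib i / φ = ψ ^ i := by
  rw [← fib_succ_sub_goldenRatio_mul_fib, div_eq_mul_inv, inv_goldenRatio, ← one_sub_goldenRatio]
  ring

-- The digit at position `b + i` contributes `(F_i, F_{i-1})` to `(p, q)`, with `F_{-1} = 1`.
lemma exists_sum_mul_fib_add_eq (e : ℕ → ℤ) (b m : ℕ) : ∃ p q : ℤ,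
    ∑ i ∈ range m, e i * fib (b + i) = fib (b + 1) * p + fib b * q ∧
      (q : ℝ) - p / φ = ∑ i ∈ range m, e i * ψ ^ i := by
  refine ⟨∑ i ∈ range m, e i * fib i, ∑ i ∈ range m, e i * (fib (i + 1) - fib i), ?_, ?_⟩
  · simp only [mul_sum, ← sum_add_distrib]
    exact sum_congr rfl fun i _ ↦ by rw [cast_fib_add]; ring
  · push_cast
    simp only [sum_div, ← sum_sub_distrib, ← fib_succ_sub_fib_sub_div_goldenRatio]
    exact sum_congr rfl fun i _ ↦ by ring

lemma inv_goldenRatio_eq_sub_one : φ⁻¹ = φ - 1 := by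
  rw [inv_goldenRatio, ← one_sub_goldenConj]; ring

lemma sum_range_succ_goldenConj_pow (δ : ℕ → ℕ) (s m : ℕ) :
    ∑ i ∈ range (m + 1), (δ (s + i) : ℝ) * ψ ^ i =
      δ s + ψ * ∑ i ∈ range m, (δ (s + 1 + i) : ℝ) * ψ ^ i := by
  rw [sum_range_succ', mul_sum, add_comm]
  simp only [add_zero, pow_zero, mul_one, pow_succ]
  congr 1
  refine sum_congr rfl fun i _ ↦ ?_
  rw [add_comm i, ← add_assoc]
  ring

lemma IsZeckDigits.sum_mul_goldenConj_pow_bounds {δ : ℕ → ℕ} (hδ : IsZeckDigits δ) (m s : ℕ) :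
    -1 < ∑ i ∈ range m, (δ (s + i) : ℝ) * ψ ^ i ∧ ∑ i ∈ range m, (δ (s + i) : ℝ) * ψ ^ i < φ ∧
      (δ s = 0 → ∑ i ∈ range m, (δ (s + i) : ℝ) * ψ ^ i < φ⁻¹) := by
  have hφ := one_lt_goldenRatio
  have hψ : ψ = 1 - φ := one_sub_goldenConj.symm
  rw [inv_goldenRatio_eq_sub_one]
  induction m generalizing s with
  | zero => simp only [range_zero, sum_empty]; refine ⟨?_, ?_, fun _ ↦ ?_⟩ <;> linarith
  | succ m ih =>
    rw [sum_range_succ_goldenConj_pow]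
    obtain ⟨h₁, h₂, h₃⟩ := ih (s + 1)
    set T := ∑ i ∈ range m, (δ (s + 1 + i) : ℝ) * ψ ^ i
    have hsq := goldenRatio_sq
    rcases hδ.eq_zero_or_eq_one s with h | h
    · simp only [h, Nat.cast_zero, zero_add, forall_const]
      refine ⟨?_, ?_, ?_⟩ <;> nlinarith
    · have h₃ := h₃ (hδ.succ_eq_zero_of_eq_one h)
      simp only [h, Nat.cast_one, one_ne_zero, IsEmpty.forall_iff, and_true]
      constructor <;> nlinarith

lemma IsZeckRep.exists_sub_eq_blockSum {n : ℕ} {δ : ℕ → ℕ} (h : IsZeckRep n δ) {b : ℕ}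
    (hb : 0 < b) : ∃ p q : ℤ, (n : ℤ) - fib (b + 1) * p - fib b * q = blockSum δ 0 b ∧
      -1 < (q : ℝ) - p / φ ∧ (q : ℝ) - p / φ ≤ if δ (b - 1) = 0 then φ else φ⁻¹ := by
  have hδ := h.isZeckDigits
  obtain ⟨-, -, -, L, hL, hn⟩ := id h
  have hn : n = ∑ k ∈ range (b + (L + 1)), δ k * fib k := by
    refine hn.trans (sum_subset (range_subset_range.2 (by omega)) fun k _ hk ↦ ?_)
    rw [hL k (by simpa using hk), zero_mul]
  rw [sum_range_add] at hn
  obtain ⟨p, q, hpq, hτ⟩ := exists_sum_mul_fib_add_eq (fun i ↦ δ (b + i)) b (L + 1)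
  obtain ⟨h₁, h₂, h₃⟩ := hδ.sum_mul_goldenConj_pow_bounds (L + 1) b
  push_cast at hpq hτ
  refine ⟨p, q, ?_, hτ ▸ h₁, ?_⟩
  · rw [blockSum, ← range_eq_Ico]
    zify at hn
    push_cast
    linear_combination hn + hpq
  · rw [hτ]
    split_ifs with hb'
    · exact h₂.le
    · obtain ⟨c, rfl⟩ : ∃ c, b = c + 1 := ⟨b - 1, by omega⟩
      refine (h₃ (hδ.succ_eq_zero_of_eq_one ?_)).le
      have := hδ.le_one c
      simp only [Nat.add_sub_cancel] at hb'
      omega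

-- A fundamental domain of the lattice `{(F_{b+1} p + F_b q, q - p/φ) : p q ∈ ℤ}` in `ℤ × ℝ`.
structure InZeckDomain (b : ℕ) (c : ℤ) (τ : ℝ) : Prop where
  nonneg : 0 ≤ c
  lt_fib : c < fib b
  neg_one_lt : -1 < τ
  le_goldenRatio : τ ≤ φ
  le_inv_goldenRatio : (fib (b - 1) : ℤ) ≤ c → τ ≤ φ⁻¹

lemma InZeckDomain.of_le_ite {b d : ℕ} {c : ℤ} {τ : ℝ} (hc : 0 ≤ c) (hcb : c < fib b)
    (hτ : -1 < τ) (hτd : τ ≤ if d = 0 then φ else φ⁻¹) (hd : d = 0 → c < fib (b - 1)) :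
    InZeckDomain b c τ where
  nonneg := hc
  lt_fib := hcb
  neg_one_lt := hτ
  le_goldenRatio := by
    have : φ⁻¹ ≤ φ := by rw [inv_goldenRatio_eq_sub_one]; linarith
    split_ifs at hτd
    exacts [hτd, hτd.trans this]
  le_inv_goldenRatio hc' := by
    split_ifs at hτd with hd0
    · exact absurd (hd hd0) (not_lt.2 hc')
    · exact hτd

lemma IsZeckDigits.inZeckDomain_blockSum {δ : ℕ → ℕ} (hδ : IsZeckDigits δ) {b : ℕ} (hb : 2 ≤ b)
    {τ : ℝ} (hτ : -1 < τ) (hτ' : τ ≤ if δ (b - 1) = 0 then φ else φ⁻¹) :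
    InZeckDomain b (blockSum δ 0 b) τ := by
  refine .of_le_ite (by positivity) (by exact_mod_cast hδ.blockSum_lt_fib (by omega)) hτ hτ'
    fun h ↦ ?_
  have := hδ.blockSum_succ_lt_fib (k := b - 1) (by omega) h
  rw [Nat.sub_add_cancel (by omega)] at this
  exact_mod_cast this

lemma inZeckDomain_of_mem_Ico {ν : ℕ → ℕ} {a b : ℕ} (hν₁ : ∀ j, ν j ≤ 1)
    (hν₂ : ∀ j, a ≤ j → j + 1 < b → ν (j + 1) = 1 → ν j = 0) (hab : a < b) {c : ℤ} {τ : ℝ}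
    (hc : c ∈ Set.Ico (blockSum ν a b : ℤ) (blockSum ν a b + blockWidth ν a)) (hτ : -1 < τ)
    (hτ' : τ ≤ if ν (b - 1) = 0 then φ else φ⁻¹) : InZeckDomain b c τ := by
  obtain ⟨hlo, hhi⟩ := hc
  have := blockSum_add_blockWidth_le hν₁ hν₂ hab.le
  refine .of_le_ite (by omega) (by omega) hτ hτ' fun h ↦ ?_
  have := blockSum_add_blockWidth_le_of_eq_zero (b := b - 1) hν₁
    (by rwa [Nat.sub_add_cancel (by omega)]) (by omega) h
  rw [Nat.sub_add_cancel (by omega)] at this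
  omega

lemma eq_one_and_eq_neg_one_of_fib_mul_add_lt {b : ℕ} {u v : ℤ} (hu : 0 < u)
    (hD : fib (b + 1) * u + fib b * v < fib b) (hw : -(1 + φ) < v - u / φ) : u = 1 ∧ v = -1 := by
  have hφ := one_lt_goldenRatio
  rw [div_eq_mul_inv, inv_goldenRatio_eq_sub_one] at hw
  have hfib : (fib b : ℤ) ≤ fib (b + 1) := by exact_mod_cast fib_le_fib_succ
  have hvu : v + u < 1 := by
    rcases Nat.eq_zero_or_pos b with rfl | hb
    · simp at hD
      omega
    · have : (0 : ℤ) < fib b := by exact_mod_cast Nat.fib_pos.2 hb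
      nlinarith
  have hvu' : (v : ℝ) ≤ -u := by exact_mod_cast (by omega : v ≤ -u)
  obtain rfl : u = 1 := by
    by_contra hne
    have hu2 : (2 : ℝ) ≤ u := by exact_mod_cast (by omega : (2 : ℤ) ≤ u)
    nlinarith
  have : (-2 : ℝ) < v := by push_cast at hw; linarith
  have : (-2 : ℤ) < v := by exact_mod_cast this
  exact ⟨rfl, by omega⟩

lemma InZeckDomain.le {b : ℕ} {n p q p' q' : ℤ}
    (h : InZeckDomain b (n - fib (b + 1) * p - fib b * q) (q - p / φ))
    (h' : InZeckDomain b (n - fib (b + 1) * p' - fib b * q') (q' - p' / φ)) : p ≤ p' := by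
  by_contra! hlt
  have hw : -(1 + φ) < ((q - q' : ℤ) : ℝ) - ((p - p' : ℤ) : ℝ) / φ := by
    have := h.neg_one_lt
    have := h'.le_goldenRatio
    push_cast
    rw [sub_div]
    linarith
  obtain ⟨hu, hv⟩ := eq_one_and_eq_neg_one_of_fib_mul_add_lt (by omega)
    (by linarith [h.nonneg, h'.lt_fib] : fib (b + 1) * (p - p') + fib b * (q - q') < fib b) hw
  obtain ⟨rfl, rfl⟩ : p = p' + 1 ∧ q = q' - 1 := by omega
  -- then `c' = c + F_{b-1}` and `τ' = τ + φ`, which leaves the domain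
  have hb : 0 < b := Nat.fib_pos.1 (by exact_mod_cast h.nonneg.trans_lt h.lt_fib)
  obtain ⟨c, rfl⟩ : ∃ c, b = c + 1 := ⟨b - 1, by omega⟩
  have hfib : (fib (c + 2) : ℤ) = fib c + fib (c + 1) := by exact_mod_cast fib_add_two
  have := h'.le_inv_goldenRatio (by have := h.nonneg; simp only [Nat.add_sub_cancel]; linarith)
  have := h.neg_one_lt
  push_cast at this
  rw [div_eq_mul_inv, inv_goldenRatio_eq_sub_one] at *
  nlinarith

lemma InZeckDomain.unique {b : ℕ} {n p q p' q' : ℤ}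
    (h : InZeckDomain b (n - fib (b + 1) * p - fib b * q) (q - p / φ))
    (h' : InZeckDomain b (n - fib (b + 1) * p' - fib b * q') (q' - p' / φ)) :
    p = p' ∧ q = q' := by
  obtain rfl := le_antisymm (h.le h') (h'.le h)
  refine ⟨rfl, ?_⟩
  have := h.nonneg; have := h.lt_fib; have := h'.nonneg; have := h'.lt_fib
  rcases lt_trichotomy q q' with hq | rfl | hq
  · nlinarith
  · rfl
  · nlinarith

lemma fib_mul_div_pow_add (x : ℝ) (b : ℕ) :
    fib (b + 1) * (x / φ ^ b) + fib b * (x / φ ^ (b + 1)) = x := by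
  have h := goldenRatio_mul_fib_succ_add_fib b
  have hφ := goldenRatio_ne_zero
  generalize φ = r at h hφ ⊢
  rw [pow_succ] at h ⊢
  field_simp
  linear_combination x * h

/-- **Two-dimensional detection of a block of Zeckendorf digits.** For `2 ≤ a < b` and an
admissible digit pattern `ν` on `[a, b)`, the digits of `n` on `[a, b)` equal `ν` iff the
point `(n/φ^b, n/φ^(b+1))` lies (mod `ℤ²`) in the parallelogram
`A = {(x,y) : M ≤ F(b+1)x + F(b)y < M + W, α ≤ −x/φ + y < 1}`. -/
theorem twodim_block_detection (a b : ℕ) (ha : 2 ≤ a) (hab : a < b) (ν : ℕ → ℕ)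
    (hν₁ : ∀ j, ν j ≤ 1)
    (hν₂ : ∀ j, a ≤ j → j + 1 < b → ν (j + 1) = 1 → ν j = 0) (n : ℕ) :
    (∀ j ∈ Finset.Ico a b, zeckDigit n j = ν j) ↔
      ∃ p q : ℤ,
        ((∑ j ∈ Finset.Ico a b, ν j * Nat.fib j : ℕ) : ℝ) ≤
            (Nat.fib (b + 1) : ℝ) * ((n : ℝ) / phi ^ b - (p : ℝ)) +
              (Nat.fib b : ℝ) * ((n : ℝ) / phi ^ (b + 1) - (q : ℝ)) ∧
          (Nat.fib (b + 1) : ℝ) * ((n : ℝ) / phi ^ b - (p : ℝ)) +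
              (Nat.fib b : ℝ) * ((n : ℝ) / phi ^ (b + 1) - (q : ℝ)) <
            ((∑ j ∈ Finset.Ico a b, ν j * Nat.fib j : ℕ) : ℝ) +
              (if ν a = 0 then (Nat.fib a : ℝ) else (Nat.fib (a - 1) : ℝ)) ∧
          (if ν (b - 1) = 0 then -phi else -(1 / phi)) ≤
            -((n : ℝ) / phi ^ b - (p : ℝ)) / phi + ((n : ℝ) / phi ^ (b + 1) - (q : ℝ)) ∧
          -((n : ℝ) / phi ^ b - (p : ℝ)) / phi + ((n : ℝ) / phi ^ (b + 1) - (q : ℝ)) < 1 := by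
  have hrep := isZeckRep_zeckDigit n
  have hdigits := hrep.isZeckDigits.forall_eq_iff_blockSum_mem hν₁ hν₂ ha hab
  obtain ⟨p₀, q₀, hc₀, hτ₀, hτ₀'⟩ := hrep.exists_sub_eq_blockSum (b := b) (by omega)
  have hlin (p q : ℤ) : (fib (b + 1) : ℝ) * (n / φ ^ b - p) + fib b * (n / φ ^ (b + 1) - q) =
      ((n - fib (b + 1) * p - fib b * q : ℤ) : ℝ) := by
    push_cast
    linear_combination fib_mul_div_pow_add n b
  have hconj (p q : ℤ) : -((n : ℝ) / φ ^ b - p) / φ + (n / φ ^ (b + 1) - q) = -(q - p / φ) := by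
    rw [pow_succ]
    field_simp
    ring
  have hα : (if ν (b - 1) = 0 then -φ else -(1 / φ)) = -(if ν (b - 1) = 0 then φ else φ⁻¹) := by
    split <;> simp
  have hW : (if ν a = 0 then (fib a : ℝ) else fib (a - 1)) = (blockWidth ν a : ℝ) := by
    unfold blockWidth
    split <;> rfl
  have hM : ∑ j ∈ Ico a b, ν j * fib j = blockSum ν a b := rfl
  simp only [show phi = φ from rfl, hlin, hconj, hα, hW, hM, neg_le_neg_iff, neg_lt]
  simp only [← Int.cast_natCast (R := ℝ), Int.cast_le, ← Int.cast_add, Int.cast_lt]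
  constructor
  · intro hdig
    obtain ⟨hlo, hhi⟩ := hdigits.1 hdig
    refine ⟨p₀, q₀, by rw [hc₀]; exact_mod_cast hlo, by rw [hc₀]; exact_mod_cast hhi, ?_, hτ₀⟩
    rwa [← hdig (b - 1) (mem_Ico.2 ⟨by omega, by omega⟩)]
  · rintro ⟨p, q, hlo, hhi, hτ', hτ⟩
    have hdom₀ := hc₀ ▸ hrep.isZeckDigits.inZeckDomain_blockSum (by omega) hτ₀ hτ₀'
    obtain ⟨rfl, rfl⟩ := (inZeckDomain_of_mem_Ico hν₁ hν₂ hab ⟨hlo, hhi⟩ hτ hτ').unique hdom₀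
    rw [hc₀] at hlo hhi
    exact hdigits.2 ⟨by exact_mod_cast hlo, by exact_mod_cast hhi⟩
end
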